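/- Let L, n, M, K be positive integers with n < L and K ≥ 2, let Ω ⊆ Z_L with |Ω| = n, and let {C^i_j : 0 ≤ i < K, 0 ≤ j < M} be a family of K sets of M length-L complex sequences, each of whose unitary DFTs satisfies |(Ĉ^i_j)_f|² = L/(L−n) for f ∉ Ω and (Ĉ^i_j)_f = 0 for f ∈ Ω. Then the maximum inter-set cross-correlation satisfies max{|θ_{C^i_l, C^j_m}(τ)| : 0 ≤ i ≠ j < K, 0 ≤ l, m < M, 0 ≤ τ < L} ≥ L/√(L−n). -/

import Mathlib

/-- Periodic cross-correlation of two length-`L` complex sequences. -/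
noncomputable def pcc (L : ℕ) (c d : ℕ → ℂ) (τ : ℕ) : ℂ :=
  ∑ t ∈ Finset.range L, c t * (starRingEnd ℂ) (d ((t + τ) % L))

/-- Unitary DFT of a length-`L` complex sequence. -/
noncomputable def udft (L : ℕ) (c : ℕ → ℂ) (f : ℕ) : ℂ :=
  ((Real.sqrt L : ℝ) : ℂ)⁻¹ * ∑ t ∈ Finset.range L,
    c t * Complex.exp (-(2 * (Real.pi : ℂ) * Complex.I * (t : ℂ) * (f : ℂ)) / (L : ℂ))

lemma exp_sum (L : ℕ) (hL : 0 < L) (a : ℤ) :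
    ∑ t ∈ Finset.range L, Complex.exp (2 * Real.pi * Complex.I * a * t / L) =
      if (L:ℤ) ∣ a then (L:ℂ) else 0 := by
  have hL0 : (L:ℂ) ≠ 0 := Nat.cast_ne_zero.mpr hL.ne'
  have hpi : (2 * (Real.pi:ℂ) * Complex.I) ≠ 0 := by
    simp [Real.pi_ne_zero, Complex.I_ne_zero]
  have hexp : ∀ t : ℕ, Complex.exp (2 * Real.pi * Complex.I * a * t / L)
      = Complex.exp (2 * Real.pi * Complex.I * a / L) ^ t := by
    intro t
    rw [← Complex.exp_nat_mul]
    ring_nf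
  simp_rw [hexp]
  by_cases h : (L:ℤ) ∣ a
  · obtain ⟨k, hk⟩ := h
    have h1 : Complex.exp (2 * Real.pi * Complex.I * a / L) = 1 := by
      rw [hk]
      push_cast
      rw [show 2 * (Real.pi:ℂ) * Complex.I * ((L:ℂ) * k) / L = k * (2 * Real.pi * Complex.I) by
        field_simp]
      exact Complex.exp_int_mul_two_pi_mul_I k
    have hd : (L:ℤ) ∣ a := ⟨k, hk⟩
    simp [h1, hd]
  · have hz : Complex.exp (2 * Real.pi * Complex.I * a / L) ≠ 1 := by
      intro h1
      rw [Complex.exp_eq_one_iff] at h1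
      obtain ⟨k, hk⟩ := h1
      apply h
      refine ⟨k, ?_⟩
      have : (a:ℂ) = (L:ℂ) * (k:ℂ) := by
        field_simp at hk
        exact hk
      exact_mod_cast this
    rw [geom_sum_eq hz]
    have hpow : Complex.exp (2 * Real.pi * Complex.I * a / L) ^ L = 1 := by
      rw [← Complex.exp_nat_mul]
      rw [show (L:ℂ) * (2 * Real.pi * Complex.I * a / L) = a * (2 * Real.pi * Complex.I) by
        field_simp]
      exact Complex.exp_int_mul_two_pi_mul_I a
    simp [hpow, h]

lemma dvd_iff_eq_mod (L : ℕ) (hL : 0 < L) (v : ℕ) (u : ℕ) (hu : u < L) :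
    (L:ℤ) ∣ (u:ℤ) - (v:ℤ) ↔ u = v % L := by
  constructor
  · intro hd
    have h1 : (u:ℤ) % L = (v:ℤ) % L := by
      rw [Int.emod_eq_emod_iff_emod_sub_eq_zero]
      exact Int.emod_eq_zero_of_dvd hd
    have h2 : (u:ℤ) % L = u := Int.emod_eq_of_lt (by positivity) (by exact_mod_cast hu)
    have h3 : ((v % L : ℕ) : ℤ) = (v:ℤ) % L := by push_cast; ring
    omega
  · intro h
    subst h
    have h3 : ((v % L : ℕ) : ℤ) = (v:ℤ) % L := by push_cast; ring
    refine ⟨-((v:ℤ) / L), ?_⟩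
    rw [h3, Int.emod_def]
    ring

lemma conj_udft (L : ℕ) (d : ℕ → ℂ) (f : ℕ) :
    (starRingEnd ℂ) (udft L d f)
      = ((Real.sqrt L : ℝ) : ℂ)⁻¹ * ∑ u ∈ Finset.range L, (starRingEnd ℂ) (d u) *
          Complex.exp ((2 * (Real.pi : ℂ) * Complex.I * (u : ℂ) * (f : ℂ)) / (L : ℂ)) := by
  unfold udft
  rw [map_mul, map_sum]
  congr 1
  · rw [map_inv₀, Complex.conj_ofReal]
  · refine Finset.sum_congr rfl fun u _ => ?_
    rw [map_mul, ← Complex.exp_conj]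
    congr 1
    simp only [map_div₀, map_neg, map_mul, map_ofNat, Complex.conj_ofReal, Complex.conj_I,
      map_natCast]
    ring

lemma hs_inv (L : ℕ) :
    ((Real.sqrt L : ℝ) : ℂ)⁻¹ * ((Real.sqrt L : ℝ) : ℂ)⁻¹ = (L:ℂ)⁻¹ := by
  rw [← mul_inv]
  congr 1
  rw [← Complex.ofReal_mul, Real.mul_self_sqrt (Nat.cast_nonneg L)]
  norm_cast

lemma pcc_eq (L : ℕ) (hL : 0 < L) (c d : ℕ → ℂ) (τ : ℕ) :
    pcc L c d τ = ∑ f ∈ Finset.range L,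
      udft L c f * (starRingEnd ℂ) (udft L d f) *
        Complex.exp (-(2 * (Real.pi : ℂ) * Complex.I * (f : ℂ) * (τ : ℂ)) / (L : ℂ)) := by
  have hL0 : (L:ℂ) ≠ 0 := Nat.cast_ne_zero.mpr hL.ne'
  have step1 : ∀ f : ℕ, udft L c f * (starRingEnd ℂ) (udft L d f) *
        Complex.exp (-(2 * (Real.pi : ℂ) * Complex.I * (f : ℂ) * (τ : ℂ)) / (L : ℂ))
      = ∑ t ∈ Finset.range L, ∑ u ∈ Finset.range L, (L:ℂ)⁻¹ * (c t * (starRingEnd ℂ) (d u)) *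
          Complex.exp (2 * Real.pi * Complex.I * (((u:ℤ) - t - τ : ℤ) : ℂ) * f / L) := by
    intro f
    have hE : ∀ t u : ℕ,
        Complex.exp (2 * Real.pi * Complex.I * (((u:ℤ) - t - τ : ℤ) : ℂ) * f / L)
        = Complex.exp (-(2 * (Real.pi : ℂ) * Complex.I * (t : ℂ) * (f : ℂ)) / (L : ℂ)) *
          Complex.exp ((2 * (Real.pi : ℂ) * Complex.I * (u : ℂ) * (f : ℂ)) / (L : ℂ)) *
          Complex.exp (-(2 * (Real.pi : ℂ) * Complex.I * (f : ℂ) * (τ : ℂ)) / (L : ℂ)) := by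
      intro t u
      rw [← Complex.exp_add, ← Complex.exp_add]
      congr 1
      push_cast
      field_simp
      ring
    rw [conj_udft, udft]
    simp_rw [hE]
    simp only [Finset.mul_sum, Finset.sum_mul]
    rw [Finset.sum_comm]
    refine Finset.sum_congr rfl fun t _ => Finset.sum_congr rfl fun u _ => ?_
    rw [← hs_inv L]
    ring
  rw [Finset.sum_congr rfl fun f _ => step1 f]
  rw [Finset.sum_comm]
  unfold pcc
  refine Finset.sum_congr rfl fun t ht => ?_
  rw [Finset.sum_comm]
  have inner : ∀ u ∈ Finset.range L,
      ∑ f ∈ Finset.range L, (L:ℂ)⁻¹ * (c t * (starRingEnd ℂ) (d u)) *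
          Complex.exp (2 * Real.pi * Complex.I * (((u:ℤ) - t - τ : ℤ) : ℂ) * f / L)
      = if u = (t + τ) % L then c t * (starRingEnd ℂ) (d u) else 0 := by
    intro u hu
    rw [← Finset.mul_sum, exp_sum L hL ((u:ℤ) - t - τ)]
    have hiff : ((L:ℤ) ∣ (u:ℤ) - t - τ) ↔ u = (t + τ) % L := by
      rw [show (u:ℤ) - t - τ = (u:ℤ) - ((t + τ : ℕ):ℤ) by push_cast; ring]
      exact dvd_iff_eq_mod L hL (t + τ) u (Finset.mem_range.mp hu)
    rw [if_congr hiff rfl rfl]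
    by_cases h : u = (t + τ) % L
    · rw [if_pos h, if_pos h]
      field_simp
    · rw [if_neg h, if_neg h, mul_zero]
  rw [Finset.sum_congr rfl inner]
  rw [Finset.sum_ite_eq' (Finset.range L) ((t + τ) % L) (fun u => c t * (starRingEnd ℂ) (d u))]
  rw [if_pos (Finset.mem_range.mpr (Nat.mod_lt _ hL))]

lemma sum_pcc (L : ℕ) (hL : 0 < L) (c d : ℕ → ℂ) :
    ∑ τ ∈ Finset.range L, pcc L c d τ * (starRingEnd ℂ) (pcc L c d τ)
      = L * ∑ f ∈ Finset.range L,
          (udft L c f * (starRingEnd ℂ) (udft L d f)) *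
          (starRingEnd ℂ) (udft L c f * (starRingEnd ℂ) (udft L d f)) := by
  have hL0 : (L:ℂ) ≠ 0 := Nat.cast_ne_zero.mpr hL.ne'
  have hconj : ∀ τ : ℕ, (starRingEnd ℂ) (pcc L c d τ)
      = ∑ g ∈ Finset.range L, (starRingEnd ℂ) (udft L c g * (starRingEnd ℂ) (udft L d g)) *
          Complex.exp ((2 * (Real.pi:ℂ) * Complex.I * (g:ℂ) * (τ:ℂ)) / L) := by
    intro τ
    rw [pcc_eq L hL c d τ, map_sum]
    refine Finset.sum_congr rfl fun g _ => ?_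
    rw [map_mul, ← Complex.exp_conj]
    congr 1
    simp only [map_div₀, map_neg, map_mul, map_ofNat, Complex.conj_ofReal, Complex.conj_I,
      map_natCast]
    ring
  have hterm : ∀ τ : ℕ, pcc L c d τ * (starRingEnd ℂ) (pcc L c d τ)
      = ∑ f ∈ Finset.range L, ∑ g ∈ Finset.range L,
          (udft L c f * (starRingEnd ℂ) (udft L d f)) *
            (starRingEnd ℂ) (udft L c g * (starRingEnd ℂ) (udft L d g)) *
            Complex.exp (2 * Real.pi * Complex.I * (((g:ℤ) - f : ℤ):ℂ) * τ / L) := by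
    intro τ
    have hE : ∀ f g : ℕ, Complex.exp (2 * Real.pi * Complex.I * (((g:ℤ) - f : ℤ):ℂ) * τ / L)
        = Complex.exp (-(2 * (Real.pi:ℂ) * Complex.I * (f:ℂ) * (τ:ℂ)) / L) *
          Complex.exp ((2 * (Real.pi:ℂ) * Complex.I * (g:ℂ) * (τ:ℂ)) / L) := by
      intro f g
      rw [← Complex.exp_add]
      congr 1
      push_cast
      field_simp
      ring
    rw [hconj τ, pcc_eq L hL c d τ]
    simp_rw [hE]
    simp only [Finset.mul_sum, Finset.sum_mul]
    rw [Finset.sum_comm]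
    refine Finset.sum_congr rfl fun f _ => Finset.sum_congr rfl fun g _ => ?_
    ring
  simp_rw [hterm]
  rw [Finset.sum_comm, Finset.mul_sum]
  refine Finset.sum_congr rfl fun f hf => ?_
  rw [Finset.sum_comm]
  have inner : ∀ g ∈ Finset.range L,
      ∑ τ ∈ Finset.range L,
          (udft L c f * (starRingEnd ℂ) (udft L d f)) *
            (starRingEnd ℂ) (udft L c g * (starRingEnd ℂ) (udft L d g)) *
            Complex.exp (2 * Real.pi * Complex.I * (((g:ℤ) - f : ℤ):ℂ) * τ / L)
      = if g = f then (udft L c f * (starRingEnd ℂ) (udft L d f)) *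
            (starRingEnd ℂ) (udft L c g * (starRingEnd ℂ) (udft L d g)) * L else 0 := by
    intro g hg
    rw [← Finset.mul_sum, exp_sum L hL ((g:ℤ) - f)]
    have hiff : ((L:ℤ) ∣ (g:ℤ) - f) ↔ g = f := by
      rw [dvd_iff_eq_mod L hL f g (Finset.mem_range.mp hg),
        Nat.mod_eq_of_lt (Finset.mem_range.mp hf)]
    rw [if_congr hiff rfl rfl]
    by_cases h : g = f
    · rw [if_pos h, if_pos h]
    · rw [if_neg h, if_neg h, mul_zero]
  rw [Finset.sum_congr rfl inner]
  rw [Finset.sum_ite_eq' (Finset.range L) f]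
  rw [if_pos hf]
  ring

lemma sum_pcc_norm (L : ℕ) (hL : 0 < L) (c d : ℕ → ℂ) :
    ∑ τ ∈ Finset.range L, ‖pcc L c d τ‖^2
      = L * ∑ f ∈ Finset.range L, ‖udft L c f‖^2 * ‖udft L d f‖^2 := by
  have this := sum_pcc L hL c d
  have hz : ∀ z : ℂ, z * (starRingEnd ℂ) z = ((‖z‖^2 : ℝ) : ℂ) := by
    intro z
    rw [Complex.mul_conj]
    norm_cast
    rw [Complex.sq_norm]
  have h3 : ∀ f : ℕ, ‖udft L c f * (starRingEnd ℂ) (udft L d f)‖^2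
      = ‖udft L c f‖^2 * ‖udft L d f‖^2 := by
    intro f
    rw [norm_mul, RCLike.norm_conj, mul_pow]
  simp_rw [hz, h3] at this
  exact_mod_cast this


/-- for `K ≥ 2` SCS sets, each of `M` sequences of length `L` sharing a
spectral constraint of size `n`, the maximum inter-set cross-correlation magnitude is
at least `L/√(L−n)`: some `|θ_{C^i_l, C^j_m}(τ)|` with `i ≠ j`, `0 ≤ τ < L` attains
at least this value. -/
theorem stmt4 (L n M K : ℕ) (hn : 0 < n) (hnL : n < L) (hM : 1 ≤ M) (hK : 2 ≤ K)
    (Ω : Finset ℕ) (hΩsub : Ω ⊆ Finset.range L) (hΩcard : Ω.card = n)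
    (C : Fin K → Fin M → ℕ → ℂ)
    (h1 : ∀ (i : Fin K) (j : Fin M), ∀ f ∈ Finset.range L, f ∉ Ω →
      ‖udft L (C i j) f‖ ^ 2 = (L : ℝ) / ((L : ℝ) - (n : ℝ)))
    (h0 : ∀ (i : Fin K) (j : Fin M), ∀ f ∈ Ω, udft L (C i j) f = 0) :
    ∃ (i j : Fin K) (l m : Fin M) (τ : ℕ), i ≠ j ∧ τ < L ∧
      (L : ℝ) / Real.sqrt ((L : ℝ) - (n : ℝ)) ≤ ‖pcc L (C i l) (C j m) τ‖ := by
  have hL : 0 < L := hn.trans hnL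
  set i : Fin K := ⟨0, by omega⟩
  set j : Fin K := ⟨1, by omega⟩
  set l : Fin M := ⟨0, hM⟩
  set x : ℝ := (L : ℝ)
  set w : ℝ := (L : ℝ) - (n : ℝ)
  have hw : 0 < w := by
    have : (n:ℝ) < (L:ℝ) := by exact_mod_cast hnL
    simp [w]; linarith
  have hx : 0 < x := by positivity
  set c := C i l
  set d := C j l
  -- compute the spectral sum
  have hsum : ∑ f ∈ Finset.range L, ‖udft L c f‖^2 * ‖udft L d f‖^2
      = ((L:ℝ) - n) * (x / w)^2 := by
    rw [← Finset.sum_sdiff hΩsub]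
    have hΩ0 : ∑ f ∈ Ω, ‖udft L c f‖^2 * ‖udft L d f‖^2 = 0 := by
      refine Finset.sum_eq_zero fun f hf => ?_
      rw [h0 i l f hf]
      simp
    have hrest : ∑ f ∈ Finset.range L \ Ω, ‖udft L c f‖^2 * ‖udft L d f‖^2
        = ((L:ℝ) - n) * (x / w)^2 := by
      rw [Finset.sum_congr rfl (fun f hf => ?_), Finset.sum_const]
      · rw [Finset.card_sdiff_of_subset hΩsub, hΩcard, Finset.card_range]
        rw [nsmul_eq_mul]
        congr 1
        push_cast [Nat.cast_sub hnL.le]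
        ring
      · rw [h1 i l f (Finset.mem_sdiff.mp hf).1 (Finset.mem_sdiff.mp hf).2,
          h1 j l f (Finset.mem_sdiff.mp hf).1 (Finset.mem_sdiff.mp hf).2]
        rw [show (L:ℝ) / ((L:ℝ) - (n:ℝ)) * ((L:ℝ) / ((L:ℝ) - (n:ℝ))) = (x / w)^2 by
          simp [x, w]; ring]
    rw [hΩ0, hrest]
    ring
  have htot : ∑ τ ∈ Finset.range L, ‖pcc L c d τ‖^2 = x * (((L:ℝ) - n) * (x / w)^2) := by
    rw [sum_pcc_norm L hL c d, hsum]
  -- extract a large term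
  have hbound : ∃ τ ∈ Finset.range L, x^2 / w ≤ ‖pcc L c d τ‖^2 := by
    by_contra hcon
    push_neg at hcon
    have hlt : ∑ τ ∈ Finset.range L, ‖pcc L c d τ‖^2
        < ∑ τ ∈ Finset.range L, x^2 / w := by
      refine Finset.sum_lt_sum_of_nonempty ⟨0, Finset.mem_range.mpr hL⟩ fun τ hτ => hcon τ hτ
    rw [htot, Finset.sum_const, Finset.card_range, nsmul_eq_mul] at hlt
    have hLn : ((L:ℝ) - n) = w := rfl
    rw [hLn] at hlt
    have : x * (w * (x / w)^2) = x * (x^2 / w) := by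
      field_simp
    rw [this] at hlt
    exact lt_irrefl _ hlt
  obtain ⟨τ, hτ, hge⟩ := hbound
  refine ⟨i, j, l, l, τ, ?_, Finset.mem_range.mp hτ, ?_⟩
  · simp [i, j, Fin.ext_iff]
  · have h1' : Real.sqrt (x^2 / w) ≤ Real.sqrt (‖pcc L c d τ‖^2) := Real.sqrt_le_sqrt hge
    rw [Real.sqrt_sq (norm_nonneg _)] at h1'
    rw [Real.sqrt_div (sq_nonneg x), Real.sqrt_sq hx.le] at h1'
    exact h1'
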